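/- Suppose f*(t) := ∑_k v_k φ_k with coefficients evolving as f_k(t) = v_k(1 − e^{−g(λ_k, t)}) where g(λ,t) = λ t. If ∑_k v_k² λ_k^{−s} < ∞ for some s ∈ (0, 1], then the loss L(t) := ∑_k v_k² e^{−2λ_k t} satisfies L(t) ≤ C_s · t^{−s} for all t > 0 with C_s = (s/(2e))^s · ∑_k v_k² λ_k^{−s}. -/
import Mathlib

lemma key_exp_bound {s u : ℝ} (hs : 0 < s) (hu : 0 < u) :
    Real.exp (-2 * u) ≤ (s / (2 * Real.exp 1)) ^ s * u ^ (-s) := by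
  have hbase : 0 < s / (2 * Real.exp 1) := by positivity
  have h1 : (s / (2 * Real.exp 1)) ^ s = Real.exp (s * Real.log (s / (2 * Real.exp 1))) := by
    rw [← Real.log_rpow hbase, Real.exp_log (Real.rpow_pos_of_pos hbase s)]
  have h2 : u ^ (-s) = Real.exp ((-s) * Real.log u) := by
    rw [← Real.log_rpow hu, Real.exp_log (Real.rpow_pos_of_pos hu _)]
  rw [h1, h2, ← Real.exp_add, Real.exp_le_exp]
  have hlog : Real.log (2 * u / s) ≤ 2 * u / s - 1 :=
    Real.log_le_sub_one_of_pos (by positivity)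
  have hlog2 : Real.log (2 * u / s) = Real.log 2 + Real.log u - Real.log s := by
    rw [Real.log_div (by positivity) (ne_of_gt hs), Real.log_mul (by norm_num) (ne_of_gt hu)]
  have hlog3 : Real.log (s / (2 * Real.exp 1)) = Real.log s - Real.log 2 - 1 := by
    rw [Real.log_div (ne_of_gt hs) (by positivity), Real.log_mul (by norm_num)
      (Real.exp_ne_zero 1), Real.log_exp]
    ring
  have := mul_le_mul_of_nonneg_left hlog (le_of_lt hs)
  rw [hlog2] at this
  have hdiv : s * (2 * u / s - 1) = 2 * u - s := by field_simp
  rw [hdiv] at this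
  nlinarith [this]

/-- Under exponential gradient-flow dynamics `f_k(t) = v_k(1 − e^{−λ_k t})`,
if `∑_k v_k² λ_k^{−s} < ∞` for some `s ∈ (0,1]`, then the loss
`L(t) = ∑_k v_k² e^{−2λ_k t}` satisfies `L(t) ≤ (s/(2e))^s (∑_k v_k² λ_k^{−s}) · t^{−s}`
for all `t > 0`. -/
theorem gradient_flow_loss_bound
    (v lam : ℕ → ℝ) (hlam : ∀ k, 0 < lam k)
    (hv : Summable fun k => (v k) ^ 2)
    (s : ℝ) (hs : s ∈ Set.Ioc (0 : ℝ) 1)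
    (hsum : Summable fun k => (v k) ^ 2 * (lam k) ^ (-s)) :
    ∀ t : ℝ, 0 < t →
      (∑' k : ℕ, (v k) ^ 2 * Real.exp (-2 * lam k * t)) ≤
        (s / (2 * Real.exp 1)) ^ s * (∑' k : ℕ, (v k) ^ 2 * (lam k) ^ (-s)) * t ^ (-s) := by
  intro t ht
  obtain ⟨hs0, hs1⟩ := hs
  have hC : 0 < (s / (2 * Real.exp 1)) ^ s := Real.rpow_pos_of_pos (by positivity) s
  -- termwise bound
  have hterm : ∀ k, (v k) ^ 2 * Real.exp (-2 * lam k * t) ≤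
      (s / (2 * Real.exp 1)) ^ s * ((v k) ^ 2 * (lam k) ^ (-s)) * t ^ (-s) := by
    intro k
    have hu : 0 < lam k * t := mul_pos (hlam k) ht
    have := key_exp_bound hs0 hu
    have hmul : (lam k * t) ^ (-s) = (lam k) ^ (-s) * t ^ (-s) :=
      Real.mul_rpow (le_of_lt (hlam k)) (le_of_lt ht)
    rw [hmul] at this
    have h2 : (-2 : ℝ) * lam k * t = -2 * (lam k * t) := by ring
    rw [h2]
    calc (v k) ^ 2 * Real.exp (-2 * (lam k * t))
        ≤ (v k) ^ 2 * ((s / (2 * Real.exp 1)) ^ s * ((lam k) ^ (-s) * t ^ (-s))) :=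
          mul_le_mul_of_nonneg_left this (sq_nonneg _)
      _ = (s / (2 * Real.exp 1)) ^ s * ((v k) ^ 2 * (lam k) ^ (-s)) * t ^ (-s) := by ring
  have hsumL : Summable fun k => (v k) ^ 2 * Real.exp (-2 * lam k * t) := by
    apply Summable.of_nonneg_of_le (fun k => by positivity) (fun k => ?_) hv
    have : Real.exp (-2 * lam k * t) ≤ 1 := by
      rw [Real.exp_le_one_iff]
      nlinarith [hlam k]
    nlinarith [sq_nonneg (v k), this, Real.exp_pos (-2 * lam k * t)]
  have hsumR : Summable fun k =>
      (s / (2 * Real.exp 1)) ^ s * ((v k) ^ 2 * (lam k) ^ (-s)) * t ^ (-s) := by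
    simpa [mul_assoc, mul_comm, mul_left_comm] using (hsum.mul_left
      ((s / (2 * Real.exp 1)) ^ s)).mul_right (t ^ (-s))
  calc (∑' k : ℕ, (v k) ^ 2 * Real.exp (-2 * lam k * t))
      ≤ ∑' k, (s / (2 * Real.exp 1)) ^ s * ((v k) ^ 2 * (lam k) ^ (-s)) * t ^ (-s) :=
        Summable.tsum_le_tsum hterm hsumL hsumR
    _ = (s / (2 * Real.exp 1)) ^ s * (∑' k : ℕ, (v k) ^ 2 * (lam k) ^ (-s)) * t ^ (-s) := by
        rw [tsum_mul_right, tsum_mul_left]
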